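/- Let π : Lit_A → ℕ[X,X̄] be a model-compatible interpretation, let 𝔄 be a structure with universe A compatible with π, and let φ be a first-order sentence such that 𝔄 ⊨ φ. Then the specialization satisfies π↓𝔄⟦φ⟧ ≠ 0, and every monomial occurring with nonzero coefficient in π↓𝔄⟦φ⟧ also occurs in π⟦φ⟧ with the same coefficient. -/

import Mathlib

/-- A finite relational vocabulary: a type of relation symbols with arities. -/
structure Vocab : Type 1 where
  Rel : Type
  arity : Rel → ℕ

/-- First-order formulas over a relational vocabulary `𝒱` (with equality),
with variables from `Vars`.  Negated atoms are included as primitive literals. -/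
inductive Formula (𝒱 : Vocab) (Vars : Type) : Type where
  | rel    : (R : 𝒱.Rel) → (Fin (𝒱.arity R) → Vars) → Formula 𝒱 Vars
  | nrel   : (R : 𝒱.Rel) → (Fin (𝒱.arity R) → Vars) → Formula 𝒱 Vars
  | equal  : Vars → Vars → Formula 𝒱 Vars
  | nequal : Vars → Vars → Formula 𝒱 Vars
  | and    : Formula 𝒱 Vars → Formula 𝒱 Vars → Formula 𝒱 Vars
  | or     : Formula 𝒱 Vars → Formula 𝒱 Vars → Formula 𝒱 Vars
  | all    : Vars → Formula 𝒱 Vars → Formula 𝒱 Vars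
  | ex     : Vars → Formula 𝒱 Vars → Formula 𝒱 Vars
  | not    : Formula 𝒱 Vars → Formula 𝒱 Vars

/-- A ground literal over vocabulary `𝒱` and universe `A`: a positive
(`pos = true`) or negated (`pos = false`) ground atom `R(ā)`. -/
structure Lit (𝒱 : Vocab) (A : Type) where
  pos : Bool
  R : 𝒱.Rel
  args : Fin (𝒱.arity R) → A

/-- Negation of a literal (the negation of a literal is again a literal). -/
def Lit.neg {𝒱 : Vocab} {A : Type} (L : Lit 𝒱 A) : Lit 𝒱 A := ⟨!L.pos, L.R, L.args⟩

namespace Formula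

variable {𝒱 : Vocab} {Vars : Type}

/-- Size of a formula (used for termination of the semiring semantics). -/
def size : Formula 𝒱 Vars → ℕ
  | rel _ _ => 1
  | nrel _ _ => 1
  | equal _ _ => 1
  | nequal _ _ => 1
  | and φ ψ => φ.size + ψ.size + 1
  | or φ ψ => φ.size + ψ.size + 1
  | all _ φ => φ.size + 1
  | ex _ φ => φ.size + 1
  | not φ => φ.size + 1

mutual
/-- Negation normal form of a formula. -/
def nnf : Formula 𝒱 Vars → Formula 𝒱 Vars
  | rel R v => rel R v
  | nrel R v => nrel R v
  | equal x y => equal x y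
  | nequal x y => nequal x y
  | and φ ψ => and φ.nnf ψ.nnf
  | or φ ψ => or φ.nnf ψ.nnf
  | all x φ => all x φ.nnf
  | ex x φ => ex x φ.nnf
  | not φ => nnfNeg φ

/-- Negation normal form of the negation of a formula: `nnfNeg φ = nnf (¬φ)`. -/
def nnfNeg : Formula 𝒱 Vars → Formula 𝒱 Vars
  | rel R v => nrel R v
  | nrel R v => rel R v
  | equal x y => nequal x y
  | nequal x y => equal x y
  | and φ ψ => or (nnfNeg φ) (nnfNeg ψ)
  | or φ ψ => and (nnfNeg φ) (nnfNeg ψ)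
  | all x φ => ex x (nnfNeg φ)
  | ex x φ => all x (nnfNeg φ)
  | not φ => nnf φ
end

theorem size_nnf_le (φ : Formula 𝒱 Vars) : φ.nnf.size ≤ φ.size ∧ (nnfNeg φ).size ≤ φ.size := by
  induction φ <;> simp_all [nnf, nnfNeg, size] <;> omega

/-- Free variables of a formula. -/
def FV [DecidableEq Vars] : Formula 𝒱 Vars → Finset Vars
  | rel _ v => Finset.image v Finset.univ
  | nrel _ v => Finset.image v Finset.univ
  | equal x y => {x, y}
  | nequal x y => {x, y}
  | and φ ψ => φ.FV ∪ ψ.FV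
  | or φ ψ => φ.FV ∪ ψ.FV
  | all x φ => φ.FV.erase x
  | ex x φ => φ.FV.erase x
  | not φ => φ.FV

end Formula

section Semantics

variable {𝒱 : Vocab} {Vars A K : Type} [DecidableEq Vars] [Fintype A] [DecidableEq A]
  [CommSemiring K]

/-- The extension of a `K`-interpretation `π : Lit 𝒱 A → K` to first-order formulas,
relative to a valuation `ν : Vars → A`:  `eval π φ ν = π⟦φ⟧ν`. -/
def eval (π : Lit 𝒱 A → K) : Formula 𝒱 Vars → (Vars → A) → K
  | .rel R v, ν => π ⟨true, R, fun i => ν (v i)⟩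
  | .nrel R v, ν => π ⟨false, R, fun i => ν (v i)⟩
  | .equal x y, ν => if ν x = ν y then 1 else 0
  | .nequal x y, ν => if ν x ≠ ν y then 1 else 0
  | .and φ ψ, ν => eval π φ ν * eval π ψ ν
  | .or φ ψ, ν => eval π φ ν + eval π ψ ν
  | .all x φ, ν => ∏ a : A, eval π φ (Function.update ν x a)
  | .ex x φ, ν => ∑ a : A, eval π φ (Function.update ν x a)
  | .not φ, ν => eval π (Formula.nnfNeg φ) ν
termination_by φ _ => φ.size
decreasing_by
  all_goals simp [Formula.size]
  all_goals first
    | omega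
    | exact Nat.lt_succ_of_le (Formula.size_nnf_le _).2
    | exact (Formula.size_nnf_le _).2

end Semantics

/-- A `𝒱`-structure with universe `A`: an interpretation of each relation symbol. -/
def Struc (𝒱 : Vocab) (A : Type) := (R : 𝒱.Rel) → (Fin (𝒱.arity R) → A) → Prop

/-- Standard (Tarski) satisfaction of a literal in a structure. -/
def Struc.SatLit {𝒱 : Vocab} {A : Type} (𝔄 : Struc 𝒱 A) (L : Lit 𝒱 A) : Prop :=
  if L.pos then 𝔄 L.R L.args else ¬ 𝔄 L.R L.args

section Sat

variable {𝒱 : Vocab} {Vars A : Type} [DecidableEq Vars]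

/-- Standard (Tarski) satisfaction relation `𝔄 ⊨ φ[ν]`. -/
def Sat (𝔄 : Struc 𝒱 A) : Formula 𝒱 Vars → (Vars → A) → Prop
  | .rel R v, ν => 𝔄 R (fun i => ν (v i))
  | .nrel R v, ν => ¬ 𝔄 R (fun i => ν (v i))
  | .equal x y, ν => ν x = ν y
  | .nequal x y, ν => ν x ≠ ν y
  | .and φ ψ, ν => Sat 𝔄 φ ν ∧ Sat 𝔄 ψ ν
  | .or φ ψ, ν => Sat 𝔄 φ ν ∨ Sat 𝔄 ψ ν
  | .all x φ, ν => ∀ a : A, Sat 𝔄 φ (Function.update ν x a)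
  | .ex x φ, ν => ∃ a : A, Sat 𝔄 φ (Function.update ν x a)
  | .not φ, ν => ¬ Sat 𝔄 φ ν

end Sat

section ModelDefining

variable {𝒱 : Vocab} {A K : Type} [CommSemiring K]

/-- A `K`-interpretation is model-defining if for each fact exactly one of the values
assigned to it and to its negation is `0`. -/
def ModelDefining (π : Lit 𝒱 A → K) : Prop :=
  ∀ L : Lit 𝒱 A, (π L = 0 ∧ π L.neg ≠ 0) ∨ (π L ≠ 0 ∧ π L.neg = 0)

/-- The structure `𝔄_π` defined by a model-defining interpretation `π`:
it satisfies a literal `L` iff `π L ≠ 0`. -/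
def StrucOf (π : Lit 𝒱 A → K) : Struc 𝒱 A := fun R a => π ⟨true, R, a⟩ ≠ 0

end ModelDefining

/-- A commutative semiring is positive if it is `+`-positive and has no divisors of zero. -/
def IsPositive (K : Type) [CommSemiring K] : Prop :=
  (∀ a b : K, a + b = 0 → a = 0 ∧ b = 0) ∧ ∀ a b : K, a * b = 0 → a = 0 ∨ b = 0


open MvPolynomial

/-- Generating relation for the dual-indeterminate congruence: `p · p̄ = 0` for `p ∈ X`
(we realize the set of tokens `X ∪ X̄` as the sum type `X ⊕ X`, with `Sum.inl p = p`
and `Sum.inr p = p̄`). -/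
def pairRel (X : Type) : MvPolynomial (X ⊕ X) ℕ → MvPolynomial (X ⊕ X) ℕ → Prop :=
  fun a b => b = 0 ∧ ∃ p : X, a = MvPolynomial.X (Sum.inl p) * MvPolynomial.X (Sum.inr p)

/-- The semiring congruence on `ℕ[X ∪ X̄]` generated by `p · p̄ = 0` for all `p ∈ X`. -/
noncomputable def dualCon (X : Type) : RingCon (MvPolynomial (X ⊕ X) ℕ) := ringConGen (pairRel X)

/-- `ℕ[X,X̄]`: the commutative semiring of dual-indeterminate polynomials, i.e. the
quotient of the polynomial semiring `ℕ[X ∪ X̄]` by the congruence `p · p̄ = 0`. -/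
abbrev DualPoly (X : Type) := (dualCon X).Quotient

/-- The image in `ℕ[X,X̄]` of a provenance token `x ∈ X ∪ X̄`. -/
noncomputable def tok {X : Type} (x : X ⊕ X) : DualPoly X :=
  ((MvPolynomial.X x : MvPolynomial (X ⊕ X) ℕ) : DualPoly X)

open Classical in
/-- Deleting from a polynomial all monomials that contain a pair of complementary tokens. -/
noncomputable def clean {X : Type} (q : MvPolynomial (X ⊕ X) ℕ) : MvPolynomial (X ⊕ X) ℕ :=
  ∑ m ∈ q.support.filter
      (fun m => ¬ ∃ p : X, m (Sum.inl p) ≠ 0 ∧ m (Sum.inr p) ≠ 0),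
    MvPolynomial.monomial m (q.coeff m)

/-- A representative polynomial of an element of `ℕ[X,X̄]`. -/
noncomputable def qrep {X : Type} (q : DualPoly X) : MvPolynomial (X ⊕ X) ℕ :=
  (Quot.exists_rep q).choose

/-- The coefficient of the monomial `m` in a dual-indeterminate polynomial:
the coefficient of `m` in the canonical (clean) representative. -/
noncomputable def coeffQ {X : Type} (q : DualPoly X) (m : (X ⊕ X) →₀ ℕ) : ℕ :=
  (clean (qrep q)).coeff m

/-- The sum of the monomial coefficients of a dual-indeterminate polynomial. -/
noncomputable def sumCoeff {X : Type} (q : DualPoly X) : ℕ :=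
  ∑ m ∈ (clean (qrep q)).support, (clean (qrep q)).coeff m


section DualInterp

variable {𝒱 : Vocab} {A X : Type}

/-- A provenance-tracking interpretation: positive facts are annotated with positive
tokens (or `0`, `1`), negative facts with negative tokens (or `0`, `1`), with the
convention that the complementary token `p̄` may only annotate the negation of the
fact annotated by `p` (and vice versa). -/
def ProvTracking (π : Lit 𝒱 A → DualPoly X) : Prop :=
  (∀ L : Lit 𝒱 A, L.pos = true → π L = 0 ∨ π L = 1 ∨ ∃ p : X, π L = tok (Sum.inl p)) ∧
  (∀ L : Lit 𝒱 A, L.pos = false → π L = 0 ∨ π L = 1 ∨ ∃ p : X, π L = tok (Sum.inr p)) ∧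
  (∀ L L' : Lit 𝒱 A, ∀ p : X,
     π L = tok (Sum.inl p) → π L' = tok (Sum.inr p) → L' = L.neg)

/-- A model-compatible interpretation: each fact is either tracked by a pair of
complementary tokens `z`, `z̄` (a distinct pair for each tracked fact), or is
annotated by `0` and `1` (untracked false fact) or by `1` and `0` (untracked true
fact). -/
def ModelCompatible (π : Lit 𝒱 A → DualPoly X) : Prop :=
  (∀ L : Lit 𝒱 A, L.pos = true →
      (∃ z : X, π L = tok (Sum.inl z) ∧ π L.neg = tok (Sum.inr z)) ∨
      (π L = 0 ∧ π L.neg = 1) ∨ (π L = 1 ∧ π L.neg = 0)) ∧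
  (∀ L L' : Lit 𝒱 A, ∀ z : X, π L = tok (Sum.inl z) → π L' = tok (Sum.inl z) → L = L')

/-- A structure `𝔄` (with the same universe `A`) is compatible with `π` if `𝔄 ⊨ L`
for every literal `L` with `π L = 1`. -/
def Compatible (π : Lit 𝒱 A → DualPoly X) (𝔄 : Struc 𝒱 A) : Prop :=
  ∀ L : Lit 𝒱 A, π L = 1 → 𝔄.SatLit L

open Classical in
/-- The specialization `π↓𝔄` of an interpretation `π` with respect to a structure `𝔄`:
`π↓𝔄(L) = π(L)` if `𝔄 ⊨ L` and `π↓𝔄(L) = 0` otherwise. -/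
noncomputable def specialize {K : Type} [CommSemiring K] (π : Lit 𝒱 A → K)
    (𝔄 : Struc 𝒱 A) : Lit 𝒱 A → K :=
  fun L => if 𝔄.SatLit L then π L else 0

end DualInterp


/-! ### Auxiliary lemmas -/

section CleanLemmas

open MvPolynomial

variable {X : Type}

/-- A monomial is *good* if it contains no complementary pair of tokens. -/
def GoodM {X : Type} (m : (X ⊕ X) →₀ ℕ) : Prop :=
  ¬ ∃ p : X, m (Sum.inl p) ≠ 0 ∧ m (Sum.inr p) ≠ 0

open Classical in
lemma clean_coeff (q : MvPolynomial (X ⊕ X) ℕ) (m : (X ⊕ X) →₀ ℕ) :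
    (clean q).coeff m = if GoodM m then q.coeff m else 0 := by
  classical
  unfold clean
  rw [coeff_sum]
  have : ∀ b ∈ q.support.filter
      (fun m => ¬ ∃ p : X, m (Sum.inl p) ≠ 0 ∧ m (Sum.inr p) ≠ 0),
      coeff m ((monomial b) (q.coeff b)) = if b = m then q.coeff b else 0 := by
    intro b _
    rw [coeff_monomial]
  rw [Finset.sum_congr rfl this, Finset.sum_ite_eq']
  simp only [Finset.mem_filter]
  by_cases hg : GoodM m
  · rw [if_pos hg]
    by_cases hm : m ∈ q.support
    · rw [if_pos ⟨hm, hg⟩]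
    · rw [if_neg (fun h => hm h.1), MvPolynomial.notMem_support_iff.mp hm]
  · rw [if_neg hg, if_neg (fun h => hg h.2)]

lemma clean_zero : clean (0 : MvPolynomial (X ⊕ X) ℕ) = 0 := by
  apply MvPolynomial.ext
  intro m
  rw [clean_coeff]
  simp

lemma clean_one : clean (1 : MvPolynomial (X ⊕ X) ℕ) = 1 := by
  classical
  apply MvPolynomial.ext
  intro m
  rw [clean_coeff]
  split
  · rfl
  next hgm =>
    rw [MvPolynomial.coeff_one]
    split
    next he => exact absurd (by rw [← he]; rintro ⟨p, h1, _⟩; simp at h1) hgm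
    · rfl

lemma clean_add (a b : MvPolynomial (X ⊕ X) ℕ) : clean (a + b) = clean a + clean b := by
  apply MvPolynomial.ext
  intro m
  rw [coeff_add, clean_coeff, clean_coeff, clean_coeff, coeff_add]
  split <;> simp

lemma GoodM.of_le {m m' : (X ⊕ X) →₀ ℕ} (h : ∀ x, m' x ≤ m x) (hm : GoodM m) : GoodM m' := by
  rintro ⟨p, h1, h2⟩
  exact hm ⟨p, fun h0 => h1 (Nat.le_zero.mp (h0 ▸ h (Sum.inl p))),
            fun h0 => h2 (Nat.le_zero.mp (h0 ▸ h (Sum.inr p)))⟩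

lemma clean_mul (a b : MvPolynomial (X ⊕ X) ℕ) :
    clean (a * b) = clean (clean a * clean b) := by
  classical
  apply MvPolynomial.ext
  intro m
  rw [clean_coeff, clean_coeff]
  split
  next hg =>
    rw [coeff_mul, coeff_mul]
    apply Finset.sum_congr rfl
    intro x hx
    rw [Finset.HasAntidiagonal.mem_antidiagonal] at hx
    have h1 : GoodM x.1 := hg.of_le (fun y => by
      rw [← hx, Finsupp.add_apply]; exact Nat.le_add_right _ _)
    have h2 : GoodM x.2 := hg.of_le (fun y => by
      rw [← hx, Finsupp.add_apply]; exact Nat.le_add_left _ _)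
    rw [clean_coeff, clean_coeff, if_pos h1, if_pos h2]
  next => rfl

/-- The relation "same clean part" is a ring congruence. -/
def cleanCon (X : Type) : RingCon (MvPolynomial (X ⊕ X) ℕ) where
  r a b := clean a = clean b
  iseqv := ⟨fun _ => rfl, Eq.symm, Eq.trans⟩
  add' {a b c d} h1 h2 := by
    show clean (a + c) = clean (b + d)
    rw [clean_add, clean_add]
    exact congrArg₂ (· + ·) h1 h2
  mul' {a b c d} h1 h2 := by
    show clean (a * c) = clean (b * d)
    rw [clean_mul a c, clean_mul b d]
    have e1 : clean a = clean b := h1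
    have e2 : clean c = clean d := h2
    rw [e1, e2]

lemma dualCon_clean {a b : MvPolynomial (X ⊕ X) ℕ} (h : dualCon X a b) :
    clean a = clean b := by
  classical
  have hle : dualCon X ≤ cleanCon X := by
    apply RingCon.ringConGen_le.mpr
    rintro x y ⟨rfl, p, rfl⟩
    show clean _ = clean 0
    rw [clean_zero]
    apply MvPolynomial.ext
    intro m
    rw [show (MvPolynomial.X (Sum.inl p) * MvPolynomial.X (Sum.inr p) : MvPolynomial (X ⊕ X) ℕ)
        = monomial (Finsupp.single (Sum.inl p) 1 + Finsupp.single (Sum.inr p) 1) 1 from by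
      rw [show (MvPolynomial.X (Sum.inl p) : MvPolynomial (X ⊕ X) ℕ)
            = monomial (Finsupp.single (Sum.inl p) 1) 1 from rfl,
          show (MvPolynomial.X (Sum.inr p) : MvPolynomial (X ⊕ X) ℕ)
            = monomial (Finsupp.single (Sum.inr p) 1) 1 from rfl, monomial_mul, mul_one],
      clean_coeff]
    split
    next hg =>
      rw [coeff_monomial]
      split
      next he =>
        exfalso
        apply hg
        refine ⟨p, ?_, ?_⟩ <;> rw [← he] <;> simp [Finsupp.single_apply]
      next => simp
    next => simp
  exact RingCon.le_def.mp hle h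

lemma clean_qrep_coe (r : MvPolynomial (X ⊕ X) ℕ) :
    clean (qrep (r : DualPoly X)) = clean r := by
  apply dualCon_clean
  have h := (Quot.exists_rep (r : DualPoly X)).choose_spec
  exact (dualCon X).eq.mp h

lemma coeffQ_coe (r : MvPolynomial (X ⊕ X) ℕ) (m : (X ⊕ X) →₀ ℕ) :
    coeffQ (r : DualPoly X) m = (clean r).coeff m := by
  unfold coeffQ
  rw [clean_qrep_coe]

lemma coe_ne_zero_of_clean {r : MvPolynomial (X ⊕ X) ℕ} (h : clean r ≠ 0) :
    (r : DualPoly X) ≠ 0 := by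
  intro h0
  apply h
  have h1 : (r : DualPoly X) = ((0 : MvPolynomial (X ⊕ X) ℕ) : DualPoly X) := by
    rw [h0]; rfl
  rw [dualCon_clean ((dualCon X).eq.mp h1), clean_zero]

lemma goodM_single (z : X ⊕ X) : GoodM (Finsupp.single z 1) := by
  classical
  rintro ⟨p, h1, hp2⟩
  rw [Finsupp.single_apply] at h1 hp2
  split at h1 <;> split at hp2 <;> simp_all

lemma clean_X (z : X ⊕ X) :
    clean (MvPolynomial.X z : MvPolynomial (X ⊕ X) ℕ) = MvPolynomial.X z := by
  classical
  apply MvPolynomial.ext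
  intro m
  rw [clean_coeff]
  split
  · rfl
  next hgm =>
    rw [MvPolynomial.coeff_X']
    split
    next he => exact absurd (he ▸ goodM_single z) hgm
    · rfl

lemma tok_injective : Function.Injective (tok : X ⊕ X → DualPoly X) := by
  intro x y h
  have h2 : clean (MvPolynomial.X x : MvPolynomial (X ⊕ X) ℕ) = clean (MvPolynomial.X y) :=
    dualCon_clean ((dualCon X).eq.mp h)
  rw [clean_X, clean_X] at h2
  exact MvPolynomial.X_injective h2

lemma tok_ne_zero (x : X ⊕ X) : tok x ≠ (0 : DualPoly X) :=
  coe_ne_zero_of_clean (by rw [clean_X]; exact MvPolynomial.X_ne_zero x)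

lemma tok_ne_one (x : X ⊕ X) : tok x ≠ (1 : DualPoly X) := by
  classical
  intro h
  have h1 : ((MvPolynomial.X x : MvPolynomial (X ⊕ X) ℕ) : DualPoly X)
      = ((1 : MvPolynomial (X ⊕ X) ℕ) : DualPoly X) := h
  have h2 := dualCon_clean ((dualCon X).eq.mp h1)
  rw [clean_X, clean_one] at h2
  have h3 := congrArg (MvPolynomial.coeff 0) h2
  rw [MvPolynomial.coeff_X', MvPolynomial.coeff_one, if_neg, if_pos rfl] at h3
  · exact one_ne_zero h3.symm
  · simp [Finsupp.single_eq_zero]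

end CleanLemmas


section KillHom

open MvPolynomial

variable {X : Type}

open Classical in
/-- The substitution homomorphism killing the tokens in `S`. -/
noncomputable def kill (S : Set (X ⊕ X)) :
    MvPolynomial (X ⊕ X) ℕ →+* MvPolynomial (X ⊕ X) ℕ :=
  eval₂Hom MvPolynomial.C (fun x => if x ∈ S then 0 else MvPolynomial.X x)

open Classical in
lemma kill_X (S : Set (X ⊕ X)) (x : X ⊕ X) :
    kill S (MvPolynomial.X x) = if x ∈ S then 0 else MvPolynomial.X x :=
  eval₂Hom_X' _ _ _

open Classical in
lemma kill_monomial (S : Set (X ⊕ X)) (m : (X ⊕ X) →₀ ℕ) (c : ℕ) :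
    kill S (monomial m c) = if (∀ x, m x ≠ 0 → x ∉ S) then monomial m c else 0 := by
  classical
  rw [kill, coe_eval₂Hom, eval₂_monomial]
  split
  next hall =>
    have : (m.prod fun n e => (if n ∈ S then 0 else MvPolynomial.X n) ^ e)
        = m.prod fun n e => (MvPolynomial.X n : MvPolynomial (X ⊕ X) ℕ) ^ e := by
      apply Finsupp.prod_congr
      intro x hx
      rw [if_neg (hall x (Finsupp.mem_support_iff.mp hx))]
    rw [this, ← monomial_eq]
  next hex =>
    push_neg at hex
    obtain ⟨x, hx, hxS⟩ := hex
    rw [Finsupp.prod, Finset.prod_eq_zero (Finsupp.mem_support_iff.mpr hx)]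
    · rw [mul_zero]
    · rw [if_pos hxS, zero_pow hx]

open Classical in
lemma kill_coeff (S : Set (X ⊕ X)) (r : MvPolynomial (X ⊕ X) ℕ) (m : (X ⊕ X) →₀ ℕ) :
    (kill S r).coeff m = if (∀ x, m x ≠ 0 → x ∉ S) then r.coeff m else 0 := by
  classical
  conv_lhs => rw [r.as_sum, map_sum]
  rw [coeff_sum]
  have : ∀ b ∈ r.support, coeff m (kill S (monomial b (r.coeff b)))
      = if b = m then (if (∀ x, m x ≠ 0 → x ∉ S) then r.coeff b else 0) else
          coeff m (kill S (monomial b (r.coeff b))) := by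
    intro b _
    split
    next hb => subst hb; rw [kill_monomial]; split <;> simp [coeff_monomial]
    next => rfl
  rw [Finset.sum_congr rfl this]
  by_cases hm : m ∈ r.support
  · rw [Finset.sum_eq_single m]
    · simp
    · intro b hb hbm
      rw [if_neg hbm, kill_monomial]
      split
      · rw [coeff_monomial, if_neg hbm]
      · exact coeff_zero m
    · intro h; exact absurd hm h
  · rw [MvPolynomial.notMem_support_iff.mp hm]
    rw [Finset.sum_eq_zero, eq_comm]
    · split <;> rfl
    · intro b hb
      split
      next hbm => subst hbm; exact absurd hb hm
      next hbm =>
        rw [kill_monomial]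
        split
        · rw [coeff_monomial, if_neg hbm]
        · exact coeff_zero m

/-- In `ℕ`-polynomials, a sum is zero only if each summand is. -/
lemma natpoly_sum_eq_zero {σ ι : Type*} {s : Finset ι} {f : ι → MvPolynomial σ ℕ}
    (h : ∑ i ∈ s, f i = 0) {i : ι} (hi : i ∈ s) : f i = 0 := by
  apply MvPolynomial.ext
  intro m
  have h2 := congrArg (MvPolynomial.coeff m) h
  rw [coeff_sum, coeff_zero] at h2
  have := (Finset.sum_eq_zero_iff).mp h2 i hi
  simpa using this

end KillHom

section EvalHom

variable {𝒱 : Vocab} {Vars A : Type} [DecidableEq Vars] [Fintype A] [DecidableEq A]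
  {K K' : Type} [CommSemiring K] [CommSemiring K']

lemma eval_ringHom_aux (F : K →+* K') (π : Lit 𝒱 A → K) :
    ∀ (n : ℕ) (φ : Formula 𝒱 Vars), φ.size ≤ n → ∀ ν,
      F (_root_.eval π φ ν) = _root_.eval (fun L => F (π L)) φ ν := by
  intro n
  induction n with
  | zero => intro φ h; cases φ <;> simp [Formula.size] at h
  | succ n ih =>
    intro φ h ν
    cases φ with
    | rel R v => simp [_root_.eval]
    | nrel R v => simp [_root_.eval]
    | equal x y => simp only [_root_.eval]; split <;> simp
    | nequal x y => simp only [_root_.eval]; split <;> simp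
    | and φ ψ =>
      simp only [_root_.eval, map_mul]
      rw [ih φ (by simp [Formula.size] at h; omega) ν,
          ih ψ (by simp [Formula.size] at h; omega) ν]
    | or φ ψ =>
      simp only [_root_.eval, map_add]
      rw [ih φ (by simp [Formula.size] at h; omega) ν,
          ih ψ (by simp [Formula.size] at h; omega) ν]
    | all x φ =>
      simp only [_root_.eval, map_prod]
      exact Finset.prod_congr rfl fun a _ =>
        ih φ (by simp [Formula.size] at h; omega) _
    | ex x φ =>
      simp only [_root_.eval, map_sum]
      exact Finset.sum_congr rfl fun a _ =>
        ih φ (by simp [Formula.size] at h; omega) _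
    | not φ =>
      simp only [_root_.eval]
      exact ih (Formula.nnfNeg φ)
        (le_trans (Formula.size_nnf_le φ).2 (by simp [Formula.size] at h; omega)) ν

lemma eval_ringHom (F : K →+* K') (π : Lit 𝒱 A → K) (φ : Formula 𝒱 Vars) (ν : Vars → A) :
    F (_root_.eval π φ ν) = _root_.eval (fun L => F (π L)) φ ν :=
  eval_ringHom_aux F π φ.size φ le_rfl ν

end EvalHom

section SatNnf

variable {𝒱 : Vocab} {Vars A : Type} [DecidableEq Vars]

lemma sat_nnf (𝔄 : Struc 𝒱 A) (φ : Formula 𝒱 Vars) :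
    ∀ ν, (Sat 𝔄 φ.nnf ν ↔ Sat 𝔄 φ ν) ∧ (Sat 𝔄 (Formula.nnfNeg φ) ν ↔ ¬ Sat 𝔄 φ ν) := by
  induction φ with
  | rel R v => intro ν; simp [Formula.nnf, Formula.nnfNeg, Sat]
  | nrel R v => intro ν; simp [Formula.nnf, Formula.nnfNeg, Sat]
  | equal x y => intro ν; simp [Formula.nnf, Formula.nnfNeg, Sat]
  | nequal x y => intro ν; simp [Formula.nnf, Formula.nnfNeg, Sat, not_not]
  | and φ ψ ihφ ihψ =>
    intro ν
    simp only [Formula.nnf, Formula.nnfNeg, Sat, (ihφ ν).1, (ihφ ν).2, (ihψ ν).1, (ihψ ν).2,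
      not_and_or]
    exact ⟨trivial, trivial⟩
  | or φ ψ ihφ ihψ =>
    intro ν
    simp only [Formula.nnf, Formula.nnfNeg, Sat, (ihφ ν).1, (ihφ ν).2, (ihψ ν).1, (ihψ ν).2,
      not_or]
    exact ⟨trivial, trivial⟩
  | all x φ ihφ =>
    intro ν
    simp only [Formula.nnf, Formula.nnfNeg, Sat]
    constructor
    · exact ⟨fun h a => (ihφ _).1.mp (h a), fun h a => (ihφ _).1.mpr (h a)⟩
    · rw [not_forall]
      exact ⟨fun ⟨a, h⟩ => ⟨a, (ihφ _).2.mp h⟩, fun ⟨a, h⟩ => ⟨a, (ihφ _).2.mpr h⟩⟩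
  | ex x φ ihφ =>
    intro ν
    simp only [Formula.nnf, Formula.nnfNeg, Sat]
    constructor
    · exact ⟨fun ⟨a, h⟩ => ⟨a, (ihφ _).1.mp h⟩, fun ⟨a, h⟩ => ⟨a, (ihφ _).1.mpr h⟩⟩
    · rw [not_exists]
      exact ⟨fun h a => (ihφ _).2.mp (h a), fun h a => (ihφ _).2.mpr (h a)⟩
  | not φ ihφ =>
    intro ν
    simp only [Formula.nnf, Formula.nnfNeg, Sat, (ihφ ν).1, (ihφ ν).2, not_not]
    exact ⟨trivial, trivial⟩

end SatNnf

section LitLemmas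

variable {𝒱 : Vocab} {A : Type}

lemma Lit.neg_neg (L : Lit 𝒱 A) : L.neg.neg = L := by
  cases L with
  | mk p R a => simp [Lit.neg]

lemma Struc.SatLit.not_neg {𝔄 : Struc 𝒱 A} {L : Lit 𝒱 A}
    (h : 𝔄.SatLit L) (h' : 𝔄.SatLit L.neg) : False := by
  cases L with
  | mk p R a =>
    cases p <;> simp [Struc.SatLit, Lit.neg] at h h' <;> [exact h h'; exact h' h]

end LitLemmas


section MainAux

open MvPolynomial

variable {𝒱 : Vocab} {A X : Type}

open Classical in
/-- A canonical polynomial lift of an interpretation. -/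
noncomputable def lift0 (π : Lit 𝒱 A → DualPoly X) (L : Lit 𝒱 A) : MvPolynomial (X ⊕ X) ℕ :=
  if π L = 0 then 0 else if π L = 1 then 1
  else if h : ∃ x, π L = tok x then MvPolynomial.X h.choose else 0

lemma Lit.neg_pos_of {L : Lit 𝒱 A} (h : L.pos = false) : L.neg.pos = true := by
  simp [Lit.neg, h]

lemma pi_form {π : Lit 𝒱 A → DualPoly X} (hπ : ModelCompatible π) (L : Lit 𝒱 A) :
    π L = 0 ∨ π L = 1 ∨ ∃ x, π L = tok x := by
  cases hL : L.pos
  · rcases hπ.1 L.neg (Lit.neg_pos_of hL) with ⟨z, _, h2⟩ | ⟨_, h2⟩ | ⟨_, h2⟩ <;>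
      rw [Lit.neg_neg] at h2
    · exact Or.inr (Or.inr ⟨_, h2⟩)
    · exact Or.inr (Or.inl h2)
    · exact Or.inl h2
  · rcases hπ.1 L hL with ⟨z, h1, _⟩ | ⟨h1, _⟩ | ⟨h1, _⟩
    · exact Or.inr (Or.inr ⟨_, h1⟩)
    · exact Or.inl h1
    · exact Or.inr (Or.inl h1)

lemma lift0_coe {π : Lit 𝒱 A → DualPoly X} (hπ : ModelCompatible π) (L : Lit 𝒱 A) :
    ((lift0 π L : MvPolynomial (X ⊕ X) ℕ) : DualPoly X) = π L := by
  unfold lift0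
  split_ifs with h0 h1 h2
  · rw [h0]; rfl
  · rw [h1]; rfl
  · exact h2.choose_spec.symm
  · rcases pi_form hπ L with h | h | h
    · exact absurd h h0
    · exact absurd h h1
    · exact absurd h h2

lemma lift0_cases {π : Lit 𝒱 A → DualPoly X} (hπ : ModelCompatible π) (L : Lit 𝒱 A) :
    (π L = 0 ∧ lift0 π L = 0) ∨ (π L = 1 ∧ lift0 π L = 1) ∨
      ∃ x, π L = tok x ∧ lift0 π L = MvPolynomial.X x := by
  unfold lift0
  split_ifs with h0 h1 h2
  · exact Or.inl ⟨h0, rfl⟩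
  · exact Or.inr (Or.inl ⟨h1, rfl⟩)
  · exact Or.inr (Or.inr ⟨h2.choose, h2.choose_spec, rfl⟩)
  · rcases pi_form hπ L with h | h | h
    · exact absurd h h0
    · exact absurd h h1
    · exact absurd h h2

lemma pos_of_tok_inl {π : Lit 𝒱 A → DualPoly X} (hπ : ModelCompatible π) {L : Lit 𝒱 A}
    {p : X} (h : π L = tok (Sum.inl p)) : L.pos = true ∧ π L.neg = tok (Sum.inr p) := by
  have hpos : L.pos = true := by
    cases hL : L.pos
    · exfalso
      rcases hπ.1 L.neg (Lit.neg_pos_of hL) with ⟨z, _, h2⟩ | ⟨_, h2⟩ | ⟨_, h2⟩ <;>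
        rw [Lit.neg_neg, h] at h2
      · simpa using tok_injective h2
      · exact tok_ne_one _ h2
      · exact tok_ne_zero _ h2
    · rfl
  refine ⟨hpos, ?_⟩
  rcases hπ.1 L hpos with ⟨z, h1, h2⟩ | ⟨h1, _⟩ | ⟨h1, _⟩
  · cases Sum.inl.inj (tok_injective (h1.symm.trans h))
    exact h2
  · exact absurd (h1.symm.trans h).symm (tok_ne_zero _)
  · exact absurd (h1.symm.trans h).symm (tok_ne_one _)

lemma pos_of_tok_inr {π : Lit 𝒱 A → DualPoly X} (hπ : ModelCompatible π) {L : Lit 𝒱 A}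
    {p : X} (h : π L = tok (Sum.inr p)) : L.pos = false ∧ π L.neg = tok (Sum.inl p) := by
  have hpos : L.pos = false := by
    cases hL : L.pos
    · rfl
    · exfalso
      rcases hπ.1 L hL with ⟨z, h1, _⟩ | ⟨h1, _⟩ | ⟨h1, _⟩ <;> rw [h] at h1
      · simpa using tok_injective h1
      · exact tok_ne_zero _ h1
      · exact tok_ne_one _ h1
  refine ⟨hpos, ?_⟩
  rcases hπ.1 L.neg (Lit.neg_pos_of hpos) with ⟨z, h1, h2⟩ | ⟨_, h2⟩ | ⟨_, h2⟩ <;>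
    rw [Lit.neg_neg] at h2
  · cases Sum.inr.inj (tok_injective (h2.symm.trans h))
    exact h1
  · exact absurd (h2.symm.trans h).symm (tok_ne_one _)
  · exact absurd (h2.symm.trans h).symm (tok_ne_zero _)

lemma tok_lit_inj {π : Lit 𝒱 A → DualPoly X} (hπ : ModelCompatible π) {L L' : Lit 𝒱 A}
    {x : X ⊕ X} (h : π L = tok x) (h' : π L' = tok x) : L = L' := by
  cases x with
  | inl p => exact hπ.2 L L' p h h'
  | inr p =>
    have h1 := (pos_of_tok_inr hπ h).2
    have h2 := (pos_of_tok_inr hπ h').2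
    have := hπ.2 L.neg L'.neg p h1 h2
    rw [← Lit.neg_neg L, this, Lit.neg_neg]

lemma dual_one_ne_zero : (1 : DualPoly X) ≠ 0 := by
  have h : ((1 : MvPolynomial (X ⊕ X) ℕ) : DualPoly X) = 1 := rfl
  rw [← h]
  exact coe_ne_zero_of_clean (by rw [clean_one]; exact one_ne_zero)

lemma satlit_pi_ne_zero {π : Lit 𝒱 A → DualPoly X} (hπ : ModelCompatible π)
    {𝔄 : Struc 𝒱 A} (h𝔄 : Compatible π 𝔄) {L : Lit 𝒱 A} (h : 𝔄.SatLit L) : π L ≠ 0 := by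
  cases hL : L.pos
  · rcases hπ.1 L.neg (Lit.neg_pos_of hL) with ⟨z, h1, h2⟩ | ⟨_, h2⟩ | ⟨h1, _⟩
    · rw [Lit.neg_neg] at h2; rw [h2]; exact tok_ne_zero _
    · rw [Lit.neg_neg] at h2; rw [h2]; exact dual_one_ne_zero
    · exact absurd (h𝔄 L.neg h1) (fun h' => Struc.SatLit.not_neg h h')
  · rcases hπ.1 L hL with ⟨z, h1, _⟩ | ⟨h1, h2⟩ | ⟨h1, _⟩
    · rw [h1]; exact tok_ne_zero _
    · exact absurd (h𝔄 L.neg h2) (fun h' => Struc.SatLit.not_neg h h')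
    · rw [h1]; exact dual_one_ne_zero

/-- All tokens occurring in a polynomial lie in `T`. -/
def VarsIn (T : Set (X ⊕ X)) (r : MvPolynomial (X ⊕ X) ℕ) : Prop :=
  ∀ m ∈ r.support, ∀ x, m x ≠ 0 → x ∈ T

lemma varsIn_zero (T : Set (X ⊕ X)) : VarsIn T 0 := by
  intro m hm
  simp at hm

lemma varsIn_one (T : Set (X ⊕ X)) : VarsIn T 1 := by
  classical
  intro m hm x hx
  exfalso
  rw [MvPolynomial.mem_support_iff, MvPolynomial.coeff_one] at hm
  classical
  split at hm
  next he => rw [← he] at hx; simp at hx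
  next => exact hm rfl

lemma varsIn_X {T : Set (X ⊕ X)} {t : X ⊕ X} (ht : t ∈ T) :
    VarsIn T (MvPolynomial.X t) := by
  intro m hm x hx
  classical
  rw [MvPolynomial.mem_support_iff, MvPolynomial.coeff_X'] at hm
  split at hm
  next he =>
    rw [← he, Finsupp.single_apply] at hx
    split at hx
    next h => rwa [← h]
    next => simp at hx
  next => exact absurd rfl hm

lemma varsIn_add {T : Set (X ⊕ X)} {a b : MvPolynomial (X ⊕ X) ℕ}
    (ha : VarsIn T a) (hb : VarsIn T b) : VarsIn T (a + b) := by
  classical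
  intro m hm x hx
  rcases Finset.mem_union.mp (MvPolynomial.support_add hm) with h | h
  · exact ha m h x hx
  · exact hb m h x hx

lemma varsIn_mul {T : Set (X ⊕ X)} {a b : MvPolynomial (X ⊕ X) ℕ}
    (ha : VarsIn T a) (hb : VarsIn T b) : VarsIn T (a * b) := by
  classical
  intro m hm x hx
  have := MvPolynomial.support_mul a b hm
  rw [Finset.mem_add] at this
  obtain ⟨m1, h1, m2, h2, rfl⟩ := this
  rw [Finsupp.add_apply] at hx
  rcases Nat.eq_zero_or_pos (m1 x) with h | h
  · exact hb m2 h2 x (by omega)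
  · exact ha m1 h1 x (by omega)

lemma varsIn_sum {T : Set (X ⊕ X)} {ι : Type*} {s : Finset ι}
    {f : ι → MvPolynomial (X ⊕ X) ℕ} (h : ∀ i ∈ s, VarsIn T (f i)) :
    VarsIn T (∑ i ∈ s, f i) := by
  classical
  induction s using Finset.induction_on with
  | empty => simpa using varsIn_zero T
  | insert _ _ hni ih =>
    rw [Finset.sum_insert hni]
    exact varsIn_add (h _ (Finset.mem_insert_self _ _))
      (ih fun i hi => h i (Finset.mem_insert_of_mem hi))

lemma varsIn_prod {T : Set (X ⊕ X)} {ι : Type*} {s : Finset ι}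
    {f : ι → MvPolynomial (X ⊕ X) ℕ} (h : ∀ i ∈ s, VarsIn T (f i)) :
    VarsIn T (∏ i ∈ s, f i) := by
  classical
  induction s using Finset.induction_on with
  | empty => simpa using varsIn_one T
  | insert _ _ hni ih =>
    rw [Finset.prod_insert hni]
    exact varsIn_mul (h _ (Finset.mem_insert_self _ _))
      (ih fun i hi => h i (Finset.mem_insert_of_mem hi))

lemma clean_of_varsIn {T : Set (X ⊕ X)}
    (hcons : ∀ p : X, ¬(Sum.inl p ∈ T ∧ Sum.inr p ∈ T))
    {r : MvPolynomial (X ⊕ X) ℕ} (hr : VarsIn T r) : clean r = r := by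
  apply MvPolynomial.ext
  intro m
  rw [clean_coeff]
  split
  · rfl
  next hgm =>
    by_contra hne
    have hm : m ∈ r.support := MvPolynomial.mem_support_iff.mpr (fun h => hne h.symm)
    apply hgm
    rintro ⟨p, h1, h2⟩
    exact hcons p ⟨hr m hm _ h1, hr m hm _ h2⟩

/-- The main induction: values of the specialized evaluation are `T`-supported
and nonzero on satisfied formulas. -/
lemma main_invariant {Vars : Type} [DecidableEq Vars] [Fintype A] [DecidableEq A]
    (𝔄 : Struc 𝒱 A) (T : Set (X ⊕ X)) (ρ : Lit 𝒱 A → MvPolynomial (X ⊕ X) ℕ)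
    (hρT : ∀ L, VarsIn T (ρ L)) (hρ0 : ∀ L, 𝔄.SatLit L → ρ L ≠ 0) :
    ∀ (n : ℕ) (φ : Formula 𝒱 Vars), φ.size ≤ n → ∀ ν,
      VarsIn T (_root_.eval ρ φ ν) ∧ (Sat 𝔄 φ ν → _root_.eval ρ φ ν ≠ 0) := by
  intro n
  induction n with
  | zero => intro φ h; cases φ <;> simp [Formula.size] at h
  | succ n ih =>
    intro φ h ν
    cases φ with
    | rel R v =>
      simp only [_root_.eval]
      refine ⟨hρT _, fun hs => hρ0 _ ?_⟩
      simpa [Struc.SatLit, Sat] using hs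
    | nrel R v =>
      simp only [_root_.eval]
      refine ⟨hρT _, fun hs => hρ0 _ ?_⟩
      simpa [Struc.SatLit, Sat] using hs
    | equal x y =>
      simp only [_root_.eval]
      constructor
      · split
        · exact varsIn_one T
        · exact varsIn_zero T
      · intro hs
        have hs' : ν x = ν y := hs
        rw [if_pos hs']
        exact one_ne_zero
    | nequal x y =>
      simp only [_root_.eval]
      constructor
      · split
        · exact varsIn_one T
        · exact varsIn_zero T
      · intro hs
        have hs' : ν x ≠ ν y := hs
        rw [if_pos hs']
        exact one_ne_zero
    | and φ ψ =>
      have hφ := ih φ (by simp [Formula.size] at h; omega) ν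
      have hψ := ih ψ (by simp [Formula.size] at h; omega) ν
      simp only [_root_.eval]
      exact ⟨varsIn_mul hφ.1 hψ.1, fun hs => mul_ne_zero (hφ.2 hs.1) (hψ.2 hs.2)⟩
    | or φ ψ =>
      have hφ := ih φ (by simp [Formula.size] at h; omega) ν
      have hψ := ih ψ (by simp [Formula.size] at h; omega) ν
      simp only [_root_.eval]
      refine ⟨varsIn_add hφ.1 hψ.1, fun hs h0 => ?_⟩
      rcases hs with hs | hs
      · exact hφ.2 hs (by
          have h1 : _root_.eval ρ φ ν + _root_.eval ρ ψ ν = 0 := h0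
          apply MvPolynomial.ext
          intro m
          have := congrArg (MvPolynomial.coeff m) h1
          rw [MvPolynomial.coeff_add, MvPolynomial.coeff_zero] at this
          simpa using (Nat.add_eq_zero.mp this).1)
      · exact hψ.2 hs (by
          have h1 : _root_.eval ρ φ ν + _root_.eval ρ ψ ν = 0 := h0
          apply MvPolynomial.ext
          intro m
          have := congrArg (MvPolynomial.coeff m) h1
          rw [MvPolynomial.coeff_add, MvPolynomial.coeff_zero] at this
          simpa using (Nat.add_eq_zero.mp this).2)
    | all x φ =>
      have hφ := fun a => ih φ (by simp [Formula.size] at h; omega) (Function.update ν x a)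
      simp only [_root_.eval]
      constructor
      · exact varsIn_prod fun a _ => (hφ a).1
      · intro hs
        rw [Finset.prod_ne_zero_iff]
        exact fun a _ => (hφ a).2 (hs a)
    | ex x φ =>
      have hφ := fun a => ih φ (by simp [Formula.size] at h; omega) (Function.update ν x a)
      simp only [_root_.eval]
      constructor
      · exact varsIn_sum fun a _ => (hφ a).1
      · rintro ⟨a, hs⟩ h0
        exact (hφ a).2 hs (natpoly_sum_eq_zero h0 (Finset.mem_univ a))
    | not φ =>
      have hsz : (Formula.nnfNeg φ).size ≤ n :=
        le_trans (Formula.size_nnf_le φ).2 (by simp [Formula.size] at h; omega)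
      have hφ := ih (Formula.nnfNeg φ) hsz ν
      simp only [_root_.eval]
      exact ⟨hφ.1, fun hs => hφ.2 ((sat_nnf 𝔄 φ ν).2.mpr hs)⟩

end MainAux


/-- for a model-compatible `π`, a compatible structure `𝔄` and a
sentence `φ` with `𝔄 ⊨ φ`, the specialization satisfies `π↓𝔄⟦φ⟧ ≠ 0`, and every
monomial of `π↓𝔄⟦φ⟧` occurs in `π⟦φ⟧` with the same coefficient. -/
theorem specialize_eval_ne_zero_and_monomials {𝒱 : Vocab} {Vars A X : Type}
    [DecidableEq Vars] [Fintype A] [DecidableEq A] [Nonempty A]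
    (π : Lit 𝒱 A → DualPoly X) (hπ : ModelCompatible π)
    (𝔄 : Struc 𝒱 A) (h𝔄 : Compatible π 𝔄)
    (φ : Formula 𝒱 Vars) (hφ : φ.FV = ∅) (ν : Vars → A) (hsat : Sat 𝔄 φ ν) :
    eval (specialize π 𝔄) φ ν ≠ 0 ∧
    ∀ m : (X ⊕ X) →₀ ℕ, coeffQ (eval (specialize π 𝔄) φ ν) m ≠ 0 →
      coeffQ (eval π φ ν) m = coeffQ (eval (specialize π 𝔄) φ ν) m := by
  classical
  set S : Set (X ⊕ X) := {x | ∃ L : Lit 𝒱 A, π L = tok x ∧ ¬ 𝔄.SatLit L} with hSdef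
  set T : Set (X ⊕ X) := {x | ∃ L : Lit 𝒱 A, 𝔄.SatLit L ∧ π L = tok x} with hTdef
  have hkill_sat : ∀ L, 𝔄.SatLit L → kill S (lift0 π L) = lift0 π L := by
    intro L hL
    rcases lift0_cases hπ L with ⟨_, h2⟩ | ⟨_, h2⟩ | ⟨x, h1, h2⟩
    · rw [h2, map_zero]
    · rw [h2, map_one]
    · rw [h2, kill_X, if_neg]
      intro hxS
      obtain ⟨L', hL'1, hL'2⟩ := hxS
      exact hL'2 (tok_lit_inj hπ hL'1 h1 ▸ hL)
  have hkill_unsat : ∀ L, ¬ 𝔄.SatLit L → kill S (lift0 π L) = 0 := by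
    intro L hL
    rcases lift0_cases hπ L with ⟨_, h2⟩ | ⟨h1, _⟩ | ⟨x, h1, h2⟩
    · rw [h2, map_zero]
    · exact absurd (h𝔄 L h1) hL
    · rw [h2, kill_X, if_pos (show x ∈ S from ⟨L, h1, hL⟩)]
  have hspec : ∀ L, specialize π 𝔄 L
      = ((kill S (lift0 π L) : MvPolynomial (X ⊕ X) ℕ) : DualPoly X) := by
    intro L
    unfold specialize
    by_cases hL : 𝔄.SatLit L
    · rw [if_pos hL, hkill_sat L hL, lift0_coe hπ]
    · rw [if_neg hL, hkill_unsat L hL]; rfl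
  have hmk : ∀ r : MvPolynomial (X ⊕ X) ℕ, ((r : DualPoly X)) = (dualCon X).mk' r :=
    fun _ => rfl
  have heval_spec : _root_.eval (specialize π 𝔄) φ ν
      = ((kill S (_root_.eval (lift0 π) φ ν) : MvPolynomial (X ⊕ X) ℕ) : DualPoly X) := by
    have e2 := eval_ringHom (kill S) (lift0 π) φ ν
    have e1 := eval_ringHom ((dualCon X).mk') (fun L => kill S (lift0 π L)) φ ν
    rw [e2, hmk, e1]
    congr 1
    funext L
    rw [hspec L, hmk]
  have heval_pi : _root_.eval π φ ν
      = ((_root_.eval (lift0 π) φ ν : MvPolynomial (X ⊕ X) ℕ) : DualPoly X) := by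
    have e1 := eval_ringHom ((dualCon X).mk') (lift0 π) φ ν
    rw [hmk, e1]
    congr 1
    funext L
    rw [← hmk, lift0_coe hπ]
  constructor
  · rw [heval_spec]
    have e2 := eval_ringHom (kill S) (lift0 π) φ ν
    rw [e2]
    have hρT : ∀ L, VarsIn T (kill S (lift0 π L)) := by
      intro L
      by_cases hL : 𝔄.SatLit L
      · rw [hkill_sat L hL]
        rcases lift0_cases hπ L with ⟨_, h2⟩ | ⟨_, h2⟩ | ⟨x, h1, h2⟩
        · rw [h2]; exact varsIn_zero T
        · rw [h2]; exact varsIn_one T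
        · rw [h2]; exact varsIn_X (show x ∈ T from ⟨L, hL, h1⟩)
      · rw [hkill_unsat L hL]; exact varsIn_zero T
    have hρ0 : ∀ L, 𝔄.SatLit L → kill S (lift0 π L) ≠ 0 := by
      intro L hL
      rw [hkill_sat L hL]
      rcases lift0_cases hπ L with ⟨h1, _⟩ | ⟨_, h2⟩ | ⟨x, _, h2⟩
      · exact absurd h1 (satlit_pi_ne_zero hπ h𝔄 hL)
      · rw [h2]; exact one_ne_zero
      · rw [h2]; exact MvPolynomial.X_ne_zero x
    have hinv := main_invariant 𝔄 T (fun L => kill S (lift0 π L)) hρT hρ0 φ.size φ le_rfl ν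
    apply coe_ne_zero_of_clean
    have hcons : ∀ p : X, ¬(Sum.inl p ∈ T ∧ Sum.inr p ∈ T) := by
      rintro p ⟨⟨L, hL, hLt⟩, ⟨L', hL', hLt'⟩⟩
      have h1 := (pos_of_tok_inl hπ hLt).2
      have h2 : L' = L.neg := tok_lit_inj hπ hLt' h1
      exact Struc.SatLit.not_neg hL (h2 ▸ hL')
    rw [clean_of_varsIn hcons hinv.1]
    exact hinv.2 hsat
  · intro m hm
    rw [heval_spec, coeffQ_coe, clean_coeff, kill_coeff] at hm
    rw [heval_spec, heval_pi, coeffQ_coe, coeffQ_coe, clean_coeff, clean_coeff, kill_coeff]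
    by_cases hg : GoodM m
    · rw [if_pos hg] at hm ⊢
      rw [if_pos hg]
      by_cases ha : ∀ x, m x ≠ 0 → x ∉ S
      · rw [if_pos ha]
      · rw [if_neg ha] at hm
        exact absurd rfl hm
    · rw [if_neg hg] at hm
      exact absurd rfl hm
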